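/- Let N = ℤ^{2n+3} with standard basis e_{x1}, e_{x2}, e_w, e_{y1},...,e_{yn}, e_{z1},...,e_{zn}, and let m, n ≥ 1. Let L be the subgroup generated by: e_{x1}+e_{yn}+e_{zn}; e_{x2}; e_w; e_{yi} and e_{zi} for 1 ≤ i ≤ n−1; e_{x1} + Σ_{i=1}^n e_{yi}; and e_{x1} + e_{x2} + m·e_w + Σ_{i=1}^n (mi+1)(e_{yi}+e_{zi}). Then the index [N : L] equals mn. -/

import Mathlib

/-- The ambient lattice `N = ℤ^{2n+3}`, with coordinates
`x₁, x₂, w, y₁, …, yₙ, z₁, …, zₙ`, modelled as `ℤ × ℤ × ℤ × (Fin n → ℤ) × (Fin n → ℤ)`. -/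
abbrev LatticeV (n : ℕ) : Type := ℤ × ℤ × ℤ × (Fin n → ℤ) × (Fin n → ℤ)

/-- The unit vector `e_{x₁}`. -/
def ex1 (n : ℕ) : LatticeV n := (1, 0, 0, 0, 0)
/-- The unit vector `e_{x₂}`. -/
def ex2 (n : ℕ) : LatticeV n := (0, 1, 0, 0, 0)
/-- The unit vector `e_w`. -/
def ew (n : ℕ) : LatticeV n := (0, 0, 1, 0, 0)
/-- The unit vector `e_{yᵢ}` (here `i : Fin n` corresponds to the index `i+1`). -/
def ey (n : ℕ) (i : Fin n) : LatticeV n := (0, 0, 0, Pi.single i 1, 0)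
/-- The unit vector `e_{zᵢ}` (here `i : Fin n` corresponds to the index `i+1`). -/
def ez (n : ℕ) (i : Fin n) : LatticeV n := (0, 0, 0, 0, Pi.single i 1)

/-- `v₂ = e_{x₁} + ∑_{i=1}^n e_{yᵢ}`. -/
def v2 (n : ℕ) : LatticeV n := ex1 n + ∑ i : Fin n, ey n i

/-- `v_nlin = e_{x₁} + e_{x₂} + m·e_w + ∑_{i=1}^n (mi+1)·(e_{yᵢ} + e_{zᵢ})`. -/
def vnlin (m n : ℕ) : LatticeV n :=
  ex1 n + ex2 n + (m : ℤ) • ew n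
    + ∑ i : Fin n, ((m : ℤ) * ((i : ℕ) + 1) + 1) • (ey n i + ez n i)

/-! The subgroup `L` is the kernel of `v ↦ x₁ - yₙ (mod mn)`. Its generators visibly lie in the
kernel. Conversely, modulo `L` the generators force `e_{zₙ} = 0`, `e_{x₁} = -e_{yₙ}` and, from the
last one, `mn • e_{yₙ} = 0`, so a vector `v` becomes `(yₙ - x₁) • e_{yₙ}`, which vanishes when
`mn ∣ x₁ - yₙ`. The map is onto `ZMod (mn)`, whence the index. -/

lemma AddSubgroup.index_ker_eq_card {G G' : Type*} [AddGroup G] [AddGroup G'] (f : G →+ G')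
    (hf : Function.Surjective f) : f.ker.index = Nat.card G' := by
  rw [AddSubgroup.index_eq_card,
    Nat.card_congr (QuotientAddGroup.quotientKerEquivOfSurjective f hf).toEquiv]

section
variable {n : ℕ}

lemma LatticeV.eq_sum (v : LatticeV n) :
    v = v.1 • ex1 n + v.2.1 • ex2 n + v.2.2.1 • ew n + ∑ i, v.2.2.2.1 i • ey n i
      + ∑ i, v.2.2.2.2 i • ez n i := by
  ext <;> simp [ex1, ex2, ew, ey, ez, Prod.fst_sum, Prod.snd_sum, Finset.sum_apply, Pi.single_apply]

def x1SubY (q : ℕ) (j : Fin n) : LatticeV n →+ ZMod q where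
  toFun v := ((v.1 - v.2.2.2.1 j : ℤ) : ZMod q)
  map_zero' := by simp
  map_add' a b := by simp only [Prod.fst_add, Prod.snd_add, Pi.add_apply]; push_cast; ring

section
variable (q : ℕ) (j : Fin n)

@[simp] lemma x1SubY_ex1 : x1SubY q j (ex1 n) = 1 := by simp [x1SubY, ex1]
@[simp] lemma x1SubY_ex2 : x1SubY q j (ex2 n) = 0 := by simp [x1SubY, ex2]
@[simp] lemma x1SubY_ew : x1SubY q j (ew n) = 0 := by simp [x1SubY, ew]
@[simp] lemma x1SubY_ez (i : Fin n) : x1SubY q j (ez n i) = 0 := by simp [x1SubY, ez]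
@[simp] lemma x1SubY_ey_self : x1SubY q j (ey n j) = -1 := by simp [x1SubY, ey]
lemma x1SubY_ey_of_ne {i : Fin n} (h : i ≠ j) : x1SubY q j (ey n i) = 0 := by
  simp [x1SubY, ey, h.symm]

lemma x1SubY_surjective : Function.Surjective (x1SubY q j) := by
  intro t
  obtain ⟨a, rfl⟩ := ZMod.intCast_surjective t
  exact ⟨(a, 0, 0, 0, 0), by simp [x1SubY]⟩

lemma x1SubY_v2 : x1SubY q j (v2 n) = 0 := by
  rw [v2, map_add, map_sum, Fintype.sum_eq_single j fun i hi => x1SubY_ey_of_ne q j hi]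
  simp

lemma x1SubY_vnlin {m : ℕ} (hj : (j : ℕ) + 1 = n) : x1SubY (m * n) j (vnlin m n) = 0 := by
  have hc : (m : ℤ) * ((j : ℕ) + 1) + 1 = ((m * n : ℕ) : ℤ) + 1 := by push_cast [← hj]; ring
  rw [vnlin, map_add, map_sum, Fintype.sum_eq_single j fun i hi => by
    simp only [map_zsmul, map_add, x1SubY_ey_of_ne _ j hi, x1SubY_ez, add_zero, smul_zero]]
  simp only [map_add, map_zsmul, x1SubY_ex1, x1SubY_ex2, x1SubY_ew, x1SubY_ey_self, x1SubY_ez, hc]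
  have hmn : (m : ZMod (m * n)) * n = 0 := by exact_mod_cast ZMod.natCast_self (m * n)
  simp [add_smul, hmn]

end

lemma ker_x1SubY_le {m : ℕ} {j : Fin n} (hj : (j : ℕ) + 1 = n) {H : AddSubgroup (LatticeV n)}
    (h₀ : ex1 n + ey n j + ez n j ∈ H) (hx₂ : ex2 n ∈ H) (hw : ew n ∈ H)
    (hy : ∀ i ≠ j, ey n i ∈ H) (hz : ∀ i ≠ j, ez n i ∈ H) (h₂ : v2 n ∈ H)
    (hnlin : vnlin m n ∈ H) :
    (x1SubY (m * n) j).ker ≤ H := by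
  let π := QuotientAddGroup.mk' H
  have hπ {u : LatticeV n} (hu : u ∈ H) : π u = 0 := (QuotientAddGroup.eq_zero_iff u).2 hu
  have hsum (f : Fin n → LatticeV n) (hf : ∀ i ≠ j, f i ∈ H) : π (∑ i, f i) = π (f j) := by
    rw [map_sum, Fintype.sum_eq_single j fun i hi => hπ (hf i hi)]
  set A := π (ex1 n)
  set B := π (ey n j)
  have hAB : A + B = 0 := by
    rw [← hπ h₂, v2, map_add, hsum _ hy]
  have hzj : π (ez n j) = 0 := by
    simpa [hAB, A, B] using hπ h₀
  have hmnB : ((m * n : ℕ) : ℤ) • B = 0 := by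
    have := hπ hnlin
    rw [vnlin, map_add, hsum _ fun i hi => zsmul_mem (add_mem (hy i hi) (hz i hi)) _] at this
    simp only [map_add, map_zsmul, hπ hx₂, hπ hw, hzj, add_zero, smul_zero] at this
    have hc : (m : ℤ) * ((j : ℕ) + 1) + 1 = ((m * n : ℕ) : ℤ) + 1 := by push_cast [← hj]; ring
    linear_combination (norm := module) this - hAB - hc • B
  intro v hv
  obtain ⟨γ, hγ⟩ : ((m * n : ℕ) : ℤ) ∣ v.1 - v.2.2.2.1 j :=
    (ZMod.intCast_zmod_eq_zero_iff_dvd _ _).1 hv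
  rw [← QuotientAddGroup.eq_zero_iff]
  change π v = 0
  rw [LatticeV.eq_sum v, map_add, hsum _ fun i hi => zsmul_mem (hz i hi) _, map_add,
    hsum _ fun i hi => zsmul_mem (hy i hi) _]
  simp only [map_add, map_zsmul, hπ hx₂, hπ hw, hzj, smul_zero, add_zero]
  linear_combination (norm := module) v.1 • hAB - hγ • B - γ • hmnB

end

/-- Let `N = ℤ^{2n+3}` with `m, n ≥ 1`, and let `L` be the subgroup generated
by `e_{x₁}+e_{yₙ}+e_{zₙ}`, `e_{x₂}`, `e_w`, the `e_{yᵢ}` and `e_{zᵢ}` for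
`1 ≤ i ≤ n−1`, `e_{x₁} + ∑ e_{yᵢ}`, and
`e_{x₁}+e_{x₂}+m·e_w+∑ (mi+1)(e_{yᵢ}+e_{zᵢ})`. Then `[N : L] = mn`. -/
theorem first_sublattice_index (m n : ℕ) (hn : 1 ≤ n)
    (L : AddSubgroup (LatticeV n))
    (hL : L = AddSubgroup.closure
      ({ex1 n + ey n ⟨n - 1, by omega⟩ + ez n ⟨n - 1, by omega⟩, ex2 n, ew n}
        ∪ {v | ∃ i : Fin n, (i : ℕ) + 1 < n ∧ v = ey n i}
        ∪ {v | ∃ i : Fin n, (i : ℕ) + 1 < n ∧ v = ez n i}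
        ∪ {v2 n, vnlin m n})) :
    L.index = m * n := by
  set j : Fin n := ⟨n - 1, by omega⟩
  have hj : (j : ℕ) + 1 = n := by simp only [j]; omega
  have hne {i : Fin n} : (i : ℕ) + 1 < n ↔ i ≠ j := by simp only [j, ne_eq, Fin.ext_iff]; omega
  have hLker : L = (x1SubY (m * n) j).ker := by
    subst hL
    refine le_antisymm ((AddSubgroup.closure_le _).2 ?_) (ker_x1SubY_le hj
      (AddSubgroup.subset_closure (by simp)) (AddSubgroup.subset_closure (by simp))
      (AddSubgroup.subset_closure (by simp))
      (fun i hi => AddSubgroup.subset_closure (Or.inl (Or.inl (Or.inr ⟨i, hne.2 hi, rfl⟩))))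
      (fun i hi => AddSubgroup.subset_closure (Or.inl (Or.inr ⟨i, hne.2 hi, rfl⟩)))
      (AddSubgroup.subset_closure (by simp)) (AddSubgroup.subset_closure (by simp)))
    rintro v ((((rfl | rfl | rfl) | ⟨i, hi, rfl⟩) | ⟨i, hi, rfl⟩) | rfl | rfl)
    · simp
    · simp
    · simp
    · exact x1SubY_ey_of_ne _ j (hne.1 hi)
    · simp
    · exact x1SubY_v2 _ j
    · exact x1SubY_vnlin j hj
  rw [hLker, AddSubgroup.index_ker_eq_card _ (x1SubY_surjective _ j), Nat.card_zmod]
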